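/- (Recursion for the reduced Toda resolvent entry, coefficient form.) For every commutative ring R, every family w : ℤ → R, every integer ℓ ≥ -1 and every n ∈ ℤ, the identity w_{n+1} ( A_{ℓ,-1}(n+2) + A_{ℓ,-1}(n+1) ) − w_n ( A_{ℓ,-1}(n) + A_{ℓ,-1}(n−1) ) = A_{ℓ+2,-1}(n+1) − A_{ℓ+2,-1}(n) holds. (This is the coefficient form, in powers of λ^{-1}, of the recursion w_{n+1}(A_{n+2}(λ) + A_{n+1}(λ) + 1) − w_n(A_n(λ) + A_{n-1}(λ) + 1) = λ^2 (A_{n+1}(λ) − A_n(λ)) for the series A_n(λ) = Σ_{ℓ≥0} A_{ℓ-1,-1}(n) λ^{-ℓ-1}.) -/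
import Mathlib


/-- Coefficients of the powers `P^ℓ = Σ_k (aAux w ℓ k n) Λ^k` of the difference
operator `P = Λ + w_n Λ⁻¹` (natural-number power index `ℓ ≥ 0`). -/
def aAux {R : Type*} [CommRing R] (w : ℤ → R) : ℕ → ℤ → ℤ → R
  | 0, k, _ => if k = 0 then 1 else 0
  | l + 1, k, n => aAux w l (k - 1) n + w (n + k + 1) * aAux w l (k + 1) n

/-- `aCoef w ℓ k n` is `A_{ℓ,k}(n)`, the coefficient of `Λ^k` in `P^{ℓ+1}`,
for an integer `ℓ` (meaningful for `ℓ ≥ -1`). -/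
def aCoef {R : Type*} [CommRing R] (w : ℤ → R) (l k n : ℤ) : R := aAux w (l + 1).toNat k n

section Aux

variable {R : Type*} [CommRing R] (w : ℤ → R)

lemma aAux_succ (m : ℕ) (k n : ℤ) :
    aAux w (m + 1) k n = aAux w m (k - 1) n + w (n + k + 1) * aAux w m (k + 1) n := rfl

/-- The recursion obtained by composing `P` on the other side: `P^{m+2} = P ∘ P^{m+1}`. -/
lemma aAux_left : ∀ (m : ℕ) (k n : ℤ),
    aAux w (m + 1) k n = aAux w m (k - 1) (n + 1) + w n * aAux w m (k + 1) (n - 1)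
  | 0, k, n => by
    simp only [aAux]
    rcases eq_or_ne k 1 with rfl | h1
    · norm_num
    · rcases eq_or_ne k (-1) with rfl | h2
      · norm_num
      · have : k - 1 ≠ 0 := by omega
        have : k + 1 ≠ 0 := by omega
        simp_all
  | m + 1, k, n => by
    rw [aAux_succ, aAux_left m (k - 1) n, aAux_left m (k + 1) n,
      aAux_succ, aAux_succ]
    ring_nf

/-- `wProd w k n = w n * w (n-1) * ⋯ * w (n-k+1)`. -/
def wProd (w : ℤ → R) : ℕ → ℤ → R
  | 0, _ => 1
  | k + 1, n => wProd w k n * w (n - k)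

lemma wProd_left : ∀ (k : ℕ) (n : ℤ), wProd w (k + 1) n = w n * wProd w k (n - 1)
  | 0, n => by simp [wProd]
  | k + 1, n => by
    rw [show (k+1+1 : ℕ) = (k+1)+1 from rfl, wProd, wProd_left k n, wProd]
    push_cast
    ring_nf

/-- Symmetry of the coefficients: `A_{ℓ,-k}(n) = w_n ⋯ w_{n-k+1} · A_{ℓ,k}(n-k)`. -/
lemma aAux_symm : ∀ (m : ℕ) (k : ℕ) (n : ℤ),
    aAux w m (-(k : ℤ)) n = wProd w k n * aAux w m (k : ℤ) (n - k)
  | 0, k, n => by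
    simp only [aAux]
    rcases Nat.eq_zero_or_pos k with rfl | hk
    · simp [wProd]
    · rw [if_neg (by omega : ¬(-(k:ℤ) = 0)), if_neg (by omega : ¬((k:ℤ) = 0))]
      ring
  | m + 1, 0, n => by simp [wProd]
  | m + 1, j + 1, n => by
    rw [aAux_succ, show (-(((j:ℕ)+1 : ℕ) : ℤ) - 1) = -(((j+2 : ℕ) : ℤ)) from by push_cast; ring,
      show (-(((j:ℕ)+1 : ℕ) : ℤ) + 1) = -((j : ℤ)) from by push_cast; ring,
      aAux_symm m (j+2) n, aAux_symm m j n, aAux_left,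
      show (j+2 : ℕ) = (j+1)+1 from rfl, wProd, wProd]
    push_cast
    ring_nf

end Aux

theorem toda_resolvent_recursion (R : Type*) [CommRing R] (w : ℤ → R) (l : ℤ) (hl : -1 ≤ l)
    (n : ℤ) :
    w (n + 1) * (aCoef w l (-1) (n + 2) + aCoef w l (-1) (n + 1)) -
        w n * (aCoef w l (-1) n + aCoef w l (-1) (n - 1)) =
      aCoef w (l + 2) (-1) (n + 1) - aCoef w (l + 2) (-1) n := by
  unfold aCoef
  set m := (l + 1).toNat with hm
  have h2 : (l + 2 + 1).toNat = m + 2 := by omega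
  rw [h2]
  have e1 := aAux_left w (m+1) (-1) (n+1)
  have e2 := aAux_succ w (m+1) (-1) n
  have e3 := aAux_succ w m (-2) (n+2)
  have e4 := aAux_left w m (-2) n
  have e5 := aAux_left w m 0 n
  have e6 := aAux_succ w m 0 n
  have e7 := aAux_symm w m 3 (n+2)
  have e8 := aAux_symm w m 3 (n+1)
  have h9a := aAux_succ w m 2 (n-1)
  have h9b := aAux_left w m 2 (n-1)
  simp only [wProd] at e7 e8
  push_cast at e7 e8
  ring_nf at e1 e2 e3 e4 e5 e6 e7 e8 h9a h9b ⊢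
  linear_combination (-1)*e1 + e2 - e3 + e4 - w (1+n)*e5 + w n*e6 - e7 + e8
    - w (1+n) * w n * (h9b - h9a)
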